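/- arXiv:1804.06369 — 3 statements merged into one kernel-verified Lean document; each statement's English description precedes it below -/
import Mathlib

section
/- For every Δθ with 0 < Δθ < π/2, we have 4/sin(Δθ) < 2π/Δθ. Consequently, for any fixed sagitta level corresponding to a central angle Δθ_min ∈ (0, π/2), the irregular polygon side count M_irr = 4/sin(Δθ_min) is strictly smaller than the regular polygon side count M_reg = 2π/Δθ_min with per-side sagitta equal to that minimum sagitta. -/
open Real (pi)
open scoped Real

/-- **The irregular polygon needs fewer sides than the regular one.**
For every `Δθ` with `0 < Δθ < π/2`, we have `4/sin Δθ < 2π/Δθ`. Consequently, for any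
fixed sagitta level corresponding to a central angle `Δθ_min ∈ (0, π/2)`, the irregular
polygon side count `M_irr = 4/sin(Δθ_min)` is strictly smaller than the regular polygon
side count `M_reg = 2π/Δθ_min` with per-side sagitta equal to that minimum sagitta. -/
theorem irregular_side_count_lt_regular
    (Δθ : ℝ) (h0 : 0 < Δθ) (h2 : Δθ < π / 2) :
    4 / Real.sin Δθ < 2 * π / Δθ := by
  -- Jordan's inequality `2 / π * x < sin x` on `(0, π / 2)`.
  have jordan : 2 / π * Δθ < Real.sin Δθ := Real.mul_lt_sin h0 h2
  calc 4 / Real.sin Δθ < 4 / (2 / π * Δθ) :=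
        div_lt_div_of_pos_left four_pos (by positivity) jordan
    _ = 2 * π / Δθ := by field_simp; ring
end

section
/- Let S > 0 and 0 < ΔQ ≤ S, and define f(q) = √(S² - q²) for q ∈ [-S, S]. For q ∈ [0, S - ΔQ], let L(q) = √(ΔQ² + (f(q) - f(q + ΔQ))²) be the length of the chord of the circle P² + Q² = S² joining (f(q), q) and (f(q + ΔQ), q + ΔQ). Then L is strictly increasing on [0, S - ΔQ]; in particular, among the polygon sides in a quadrant obtained by dividing the Q-axis into equal segments of length ΔQ, the side adjacent to the P-axis (q = 0) is shortest and the side adjacent to the Q-axis is longest. -/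
private lemma chord_diff_eq (S ΔQ q : ℝ) (h0 : 0 < ΔQ) (hq : 0 ≤ q)
    (hqS : q + ΔQ ≤ S) :
    Real.sqrt (S ^ 2 - q ^ 2) - Real.sqrt (S ^ 2 - (q + ΔQ) ^ 2)
      = ΔQ * (2 * q + ΔQ) /
        (Real.sqrt (S ^ 2 - q ^ 2) + Real.sqrt (S ^ 2 - (q + ΔQ) ^ 2)) := by
  have hqS' : q < S := by linarith
  have h1 : (0:ℝ) ≤ S ^ 2 - q ^ 2 := by nlinarith
  have h2 : (0:ℝ) ≤ S ^ 2 - (q + ΔQ) ^ 2 := by nlinarith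
  have h1' : (0:ℝ) < S ^ 2 - q ^ 2 := by nlinarith
  have hs1 : 0 < Real.sqrt (S ^ 2 - q ^ 2) := Real.sqrt_pos.mpr h1'
  have hs2 : 0 ≤ Real.sqrt (S ^ 2 - (q + ΔQ) ^ 2) := Real.sqrt_nonneg _
  have hden : 0 < Real.sqrt (S ^ 2 - q ^ 2) + Real.sqrt (S ^ 2 - (q + ΔQ) ^ 2) := by
    linarith
  rw [eq_div_iff (ne_of_gt hden)]
  have e1 : Real.sqrt (S ^ 2 - q ^ 2) ^ 2 = S ^ 2 - q ^ 2 := Real.sq_sqrt h1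
  have e2 : Real.sqrt (S ^ 2 - (q + ΔQ) ^ 2) ^ 2 = S ^ 2 - (q + ΔQ) ^ 2 :=
    Real.sq_sqrt h2
  nlinarith [e1, e2]

/-- **Side lengths of the irregular polygon increase from the P-axis to the Q-axis.**
Let `S > 0` and `0 < ΔQ ≤ S`, and define `f(q) = √(S² - q²)`. For `q ∈ [0, S - ΔQ]`, let
`L(q) = √(ΔQ² + (f(q) - f(q + ΔQ))²)` be the length of the chord of the circle
`P² + Q² = S²` joining `(f(q), q)` and `(f(q + ΔQ), q + ΔQ)`. Then `L` is strictly
increasing on `[0, S - ΔQ]`; in particular, among the polygon sides in a quadrant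
obtained by dividing the Q-axis into equal segments of length `ΔQ`, the side adjacent to
the P-axis (`q = 0`) is shortest and the side adjacent to the Q-axis is longest. -/
theorem irregular_polygon_side_length_strictMonoOn
    (S ΔQ : ℝ) (hS : 0 < S) (h0 : 0 < ΔQ) (hQS : ΔQ ≤ S) :
    StrictMonoOn
      (fun q : ℝ => Real.sqrt (ΔQ ^ 2 +
        (Real.sqrt (S ^ 2 - q ^ 2) - Real.sqrt (S ^ 2 - (q + ΔQ) ^ 2)) ^ 2))
      (Set.Icc 0 (S - ΔQ)) := by
  intro a ha b hb hab
  obtain ⟨ha0, haS⟩ := ha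
  obtain ⟨hb0, hbS⟩ := hb
  have haS' : a + ΔQ ≤ S := by linarith
  have hbS' : b + ΔQ ≤ S := by linarith
  have ea := chord_diff_eq S ΔQ a h0 ha0 haS'
  have eb := chord_diff_eq S ΔQ b h0 hb0 hbS'
  simp only
  apply Real.sqrt_lt_sqrt
  · positivity
  have hDa0 : (0:ℝ) < S ^ 2 - a ^ 2 := by nlinarith
  have hsa : 0 < Real.sqrt (S ^ 2 - a ^ 2) := Real.sqrt_pos.mpr hDa0
  have hsa' : 0 ≤ Real.sqrt (S ^ 2 - (a + ΔQ) ^ 2) := Real.sqrt_nonneg _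
  have hDb0 : (0:ℝ) < S ^ 2 - b ^ 2 := by nlinarith
  have hsb : 0 < Real.sqrt (S ^ 2 - b ^ 2) := Real.sqrt_pos.mpr hDb0
  have hsb' : 0 ≤ Real.sqrt (S ^ 2 - (b + ΔQ) ^ 2) := Real.sqrt_nonneg _
  -- denominators
  have hd1 : Real.sqrt (S ^ 2 - b ^ 2) < Real.sqrt (S ^ 2 - a ^ 2) := by
    apply Real.sqrt_lt_sqrt (by nlinarith)
    nlinarith
  have hd2 : Real.sqrt (S ^ 2 - (b + ΔQ) ^ 2) ≤ Real.sqrt (S ^ 2 - (a + ΔQ) ^ 2) := by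
    apply Real.sqrt_le_sqrt
    nlinarith
  have hdenb : 0 < Real.sqrt (S ^ 2 - b ^ 2) + Real.sqrt (S ^ 2 - (b + ΔQ) ^ 2) := by
    linarith
  have hdena : 0 < Real.sqrt (S ^ 2 - a ^ 2) + Real.sqrt (S ^ 2 - (a + ΔQ) ^ 2) := by
    linarith
  have hnum : 0 < ΔQ * (2 * a + ΔQ) := by nlinarith
  have hnumlt : ΔQ * (2 * a + ΔQ) < ΔQ * (2 * b + ΔQ) := by nlinarith
  have hg : ΔQ * (2 * a + ΔQ) /
        (Real.sqrt (S ^ 2 - a ^ 2) + Real.sqrt (S ^ 2 - (a + ΔQ) ^ 2))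
      < ΔQ * (2 * b + ΔQ) /
        (Real.sqrt (S ^ 2 - b ^ 2) + Real.sqrt (S ^ 2 - (b + ΔQ) ^ 2)) := by
    apply div_lt_div₀ hnumlt (by linarith) (by nlinarith : (0:ℝ) ≤ ΔQ * (2 * b + ΔQ)) hdenb
  have hga : 0 ≤ ΔQ * (2 * a + ΔQ) /
      (Real.sqrt (S ^ 2 - a ^ 2) + Real.sqrt (S ^ 2 - (a + ΔQ) ^ 2)) :=
    le_of_lt (div_pos hnum hdena)
  rw [ea, eb]
  have := pow_lt_pow_left₀ hg hga (n := 2) (by norm_num)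
  linarith
end

section
/- Let S > 0 and 0 < ΔQ ≤ S, with f(q) = √(S² - q²). For q ∈ [0, S - ΔQ], let e(q) = S - √(S² - (L(q)/2)²) be the sagitta of the chord joining (f(q), q) and (f(q + ΔQ), q + ΔQ), where L(q) is its length. Then e is strictly increasing on [0, S - ΔQ]; in particular, the polygon side adjacent to the P-axis has the minimum sagitta (approximation error) among all sides in the quadrant. -/
lemma sagitta_diff_strictMonoOn (S ΔQ : ℝ) (hS : 0 < S) (h0 : 0 < ΔQ) (hQS : ΔQ ≤ S) :
    StrictMonoOn
      (fun q : ℝ => Real.sqrt (S ^ 2 - q ^ 2) - Real.sqrt (S ^ 2 - (q + ΔQ) ^ 2))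
      (Set.Icc 0 (S - ΔQ)) := by
  have hconv : Convex ℝ (Set.Icc (0:ℝ) (S - ΔQ)) := convex_Icc _ _
  apply strictMonoOn_of_deriv_pos hconv
  · apply ContinuousOn.sub <;>
      exact (Real.continuous_sqrt.comp (by continuity)).continuousOn
  · intro q hq
    rw [interior_Icc] at hq
    obtain ⟨hq0, hq1⟩ := hq
    have hA : 0 < S ^ 2 - q ^ 2 := by nlinarith
    have hB : 0 < S ^ 2 - (q + ΔQ) ^ 2 := by nlinarith
    have d1 : HasDerivAt (fun q : ℝ => S ^ 2 - q ^ 2) (-(2 * q)) q := by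
      simpa using ((hasDerivAt_pow 2 q).const_sub (S ^ 2))
    have d2 : HasDerivAt (fun q : ℝ => S ^ 2 - (q + ΔQ) ^ 2) (-(2 * (q + ΔQ))) q := by
      have h := ((hasDerivAt_id q).add_const ΔQ).pow 2
      simpa using (h.const_sub (S ^ 2))
    have s1 : HasDerivAt (fun q : ℝ => Real.sqrt (S ^ 2 - q ^ 2))
        (-(2 * q) / (2 * Real.sqrt (S ^ 2 - q ^ 2))) q := by
      simpa [div_eq_inv_mul, mul_comm, Function.comp_def] using
        (Real.hasDerivAt_sqrt hA.ne').comp q d1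
    have s2 : HasDerivAt (fun q : ℝ => Real.sqrt (S ^ 2 - (q + ΔQ) ^ 2))
        (-(2 * (q + ΔQ)) / (2 * Real.sqrt (S ^ 2 - (q + ΔQ) ^ 2))) q := by
      simpa [div_eq_inv_mul, mul_comm, Function.comp_def] using
        (Real.hasDerivAt_sqrt hB.ne').comp q d2
    rw [show (fun q : ℝ => Real.sqrt (S ^ 2 - q ^ 2) - Real.sqrt (S ^ 2 - (q + ΔQ) ^ 2)) = (fun q : ℝ => Real.sqrt (S ^ 2 - q ^ 2)) - (fun q : ℝ => Real.sqrt (S ^ 2 - (q + ΔQ) ^ 2)) from rfl, (s1.sub s2).deriv]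
    have hsA : 0 < Real.sqrt (S ^ 2 - q ^ 2) := Real.sqrt_pos.mpr hA
    have hsB : 0 < Real.sqrt (S ^ 2 - (q + ΔQ) ^ 2) := Real.sqrt_pos.mpr hB
    have hBA : Real.sqrt (S ^ 2 - (q + ΔQ) ^ 2) < Real.sqrt (S ^ 2 - q ^ 2) := by
      apply Real.sqrt_lt_sqrt hB.le
      nlinarith
    have key : q / Real.sqrt (S ^ 2 - q ^ 2)
        < (q + ΔQ) / Real.sqrt (S ^ 2 - (q + ΔQ) ^ 2) := by
      calc q / Real.sqrt (S ^ 2 - q ^ 2)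
          < (q + ΔQ) / Real.sqrt (S ^ 2 - q ^ 2) := by gcongr; linarith
        _ < (q + ΔQ) / Real.sqrt (S ^ 2 - (q + ΔQ) ^ 2) :=
            div_lt_div_of_pos_left (by linarith) hsB hBA
    have e1 : -(2 * q) / (2 * Real.sqrt (S ^ 2 - q ^ 2))
        = -(q / Real.sqrt (S ^ 2 - q ^ 2)) := by
      rw [neg_div, mul_div_mul_left _ _ (two_ne_zero)]
    have e2 : -(2 * (q + ΔQ)) / (2 * Real.sqrt (S ^ 2 - (q + ΔQ) ^ 2))
        = -((q + ΔQ) / Real.sqrt (S ^ 2 - (q + ΔQ) ^ 2)) := by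
      rw [neg_div, mul_div_mul_left _ _ (two_ne_zero)]
    rw [e1, e2]
    linarith

/-- **Sagittas of the irregular polygon increase from the P-axis to the Q-axis.**
Let `S > 0` and `0 < ΔQ ≤ S`, with `f(q) = √(S² - q²)`. For `q ∈ [0, S - ΔQ]`, let
`e(q) = S - √(S² - (L(q)/2)²)` be the sagitta of the chord joining `(f(q), q)` and
`(f(q + ΔQ), q + ΔQ)`, where `L(q) = √(ΔQ² + (f(q) - f(q + ΔQ))²)` is its length. Then
`e` is strictly increasing on `[0, S - ΔQ]`; in particular, the polygon side adjacent to
the P-axis has the minimum sagitta (approximation error) among all sides in the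
quadrant. -/
theorem irregular_polygon_side_sagitta_strictMonoOn
    (S ΔQ : ℝ) (hS : 0 < S) (h0 : 0 < ΔQ) (hQS : ΔQ ≤ S) :
    StrictMonoOn
      (fun q : ℝ => S - Real.sqrt (S ^ 2 -
        (Real.sqrt (ΔQ ^ 2 +
          (Real.sqrt (S ^ 2 - q ^ 2) - Real.sqrt (S ^ 2 - (q + ΔQ) ^ 2)) ^ 2) / 2) ^ 2))
      (Set.Icc 0 (S - ΔQ)) := by
  intro a ha b hb hab
  set da := Real.sqrt (S ^ 2 - a ^ 2) - Real.sqrt (S ^ 2 - (a + ΔQ) ^ 2) with hda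
  set db := Real.sqrt (S ^ 2 - b ^ 2) - Real.sqrt (S ^ 2 - (b + ΔQ) ^ 2) with hdb
  have hd : da < db := sagitta_diff_strictMonoOn S ΔQ hS h0 hQS ha hb hab
  have hda0 : 0 ≤ da := by
    have : Real.sqrt (S ^ 2 - (a + ΔQ) ^ 2) ≤ Real.sqrt (S ^ 2 - a ^ 2) := by
      apply Real.sqrt_le_sqrt
      nlinarith [ha.1]
    simpa [hda] using this
  have hdbS : db ≤ S := by
    have h1 : Real.sqrt (S ^ 2 - b ^ 2) ≤ S := by
      have h := Real.sqrt_le_sqrt (show S ^ 2 - b ^ 2 ≤ S ^ 2 by nlinarith [hb.1])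
      rwa [Real.sqrt_sq hS.le] at h
    have h2 : 0 ≤ Real.sqrt (S ^ 2 - (b + ΔQ) ^ 2) := Real.sqrt_nonneg _
    simp only [hdb]
    linarith
  have hLa : (Real.sqrt (ΔQ ^ 2 + da ^ 2) / 2) ^ 2 = (ΔQ ^ 2 + da ^ 2) / 4 := by
    rw [div_pow, Real.sq_sqrt (by positivity)]
    ring
  have hLb : (Real.sqrt (ΔQ ^ 2 + db ^ 2) / 2) ^ 2 = (ΔQ ^ 2 + db ^ 2) / 4 := by
    rw [div_pow, Real.sq_sqrt (by positivity)]
    ring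
  simp only [← hda, ← hdb, hLa, hLb]
  have hlt : S ^ 2 - (ΔQ ^ 2 + db ^ 2) / 4 < S ^ 2 - (ΔQ ^ 2 + da ^ 2) / 4 := by
    nlinarith
  have hnn : 0 ≤ S ^ 2 - (ΔQ ^ 2 + db ^ 2) / 4 := by
    nlinarith
  have := Real.sqrt_lt_sqrt hnn hlt
  linarith
end
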